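/- arXiv:1803.11034 — 2 statements merged into one kernel-verified Lean document; each statement's English description precedes it below -/
import Mathlib

section
/- For any two distributions Δ and Δ' of Σ: Δ ≤_Σ Δ' if and only if, for every language L ⊆ Σ*, whenever L is decomposable with respect to Δ, L is also decomposable with respect to Δ'. -/
/-- A *distribution* of the (finite) alphabet `α`: a family of non-empty,
pairwise incomparable (under set inclusion) sub-alphabets whose union is `α`.
Its size is `comps.ncard`. -/
structure Distr (α : Type) [Fintype α] where
  comps : Set (Set α)
  comps_nonempty : ∀ S ∈ comps, S.Nonempty
  comps_cover : ∀ a : α, ∃ S ∈ comps, a ∈ S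
  comps_incomp : ∀ S ∈ comps, ∀ T ∈ comps, S ≠ T → ¬ S ⊆ T

section Defs

variable {α : Type} [Fintype α]

/-- Natural projection `P_{Σ'}`: erase from a string all symbols not in `S`. -/
noncomputable def projA (S : Set α) (s : List α) : List α :=
  s.filter fun a => @decide (a ∈ S) (Classical.propDecidable _)

/-- `L` is decomposable with respect to `Δ`:
`L = ∥_i P_{Σ_i}(L) = ⋂_i P_{Σ_i}⁻¹(P_{Σ_i}(L))`. -/
def Decomposable (L : Set (List α)) (Δ : Distr α) : Prop :=
  L = ⋂ S ∈ Δ.comps, projA S ⁻¹' (projA S '' L)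

/-- The partial order `≤_Σ` on distributions: every component of `Δ` is
contained in some component of `Δ'`. -/
def DistLE (Δ Δ' : Distr α) : Prop :=
  ∀ S ∈ Δ.comps, ∃ T ∈ Δ'.comps, S ⊆ T

/-- `P` is a *reduction* of `Δ`. -/
def IsReduction (P : Set (Distr α)) (Δ : Distr α) : Prop :=
  2 ≤ P.ncard ∧
  (∀ Δ' ∈ P, Δ'.comps.ncard < Δ.comps.ncard) ∧
  (∀ L : Set (List α), Decomposable L Δ ↔ ∀ Δ' ∈ P, Decomposable L Δ')

/-- The maximal members (under set inclusion) of a family of sets. -/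
def MaximalMem {β : Type} (F : Set (Set β)) : Set (Set β) :=
  {S | S ∈ F ∧ ∀ T ∈ F, S ⊆ T → S = T}

/-- The dependence relation `D_Δ`. -/
def DepRel (Δ : Distr α) : Set (α × α) :=
  {p | ∃ S ∈ Δ.comps, p.1 ∈ S ∧ p.2 ∈ S}

/-- The independence relation `I_Δ = Σ × Σ − D_Δ`. -/
def IndepRel (Δ : Distr α) : Set (α × α) :=
  {p | ¬ ∃ S ∈ Δ.comps, p.1 ∈ S ∧ p.2 ∈ S}

/-- `Σ' ⊑ Δ`: `Σ'` is contained in some component of `Δ`. -/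
def SqSub (S : Set α) (Δ : Distr α) : Prop :=
  ∃ T ∈ Δ.comps, S ⊆ T

/-- `Δ` is the greatest lower bound of the family `D` with respect to `≤_Σ`. -/
def IsGLBFam {l : ℕ} (D : Fin l → Distr α) (Δ : Distr α) : Prop :=
  (∀ i, DistLE Δ (D i)) ∧
  ∀ Δ''' : Distr α, (∀ i, DistLE Δ''' (D i)) → DistLE Δ''' Δ

/-- `Δ'` is *merged* from `Δ`: `Δ' ≠ (Σ)` and `Δ'` is obtained from a
partition of the components of `Δ` having at least one block of size ≥ 2 by
taking the unions over the blocks and keeping only the maximal resulting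
sub-alphabets. -/
def MergedFrom (Δ' Δ : Distr α) : Prop :=
  Δ'.comps ≠ {Set.univ} ∧
  ∃ part : Set (Set (Set α)),
    (∀ B ∈ part, B.Nonempty) ∧
    (∀ B ∈ part, B ⊆ Δ.comps) ∧
    (∀ B ∈ part, ∀ C ∈ part, B ≠ C → Disjoint B C) ∧
    (∀ S ∈ Δ.comps, ∃ B ∈ part, S ∈ B) ∧
    (∃ B ∈ part, ∃ S ∈ B, ∃ T ∈ B, S ≠ T) ∧
    Δ'.comps = MaximalMem {U : Set α | ∃ B ∈ part, U = ⋃₀ B}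

/-- Membership in the search space `S_Δ`: a set of distributions merged from
`Δ` that are pairwise `≤_Σ`-incomparable. -/
def MemS (Δ : Distr α) (P : Set (Distr α)) : Prop :=
  (∀ Δ' ∈ P, MergedFrom Δ' Δ) ∧
  ∀ Δ₁ ∈ P, ∀ Δ₂ ∈ P, Δ₁ ≠ Δ₂ → ¬ DistLE Δ₁ Δ₂

/-- The ordering `≤_Δ` on sets of distributions: every member of `Q` has a
member of `P` below it with respect to `≤_Σ`. -/
def SetLE (P Q : Set (Distr α)) : Prop :=
  ∀ Δ' ∈ Q, ∃ Δ'' ∈ P, DistLE Δ'' Δ'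

/-- `[F]`: the `≤_Σ`-minimal members of a set of distributions. -/
def MinimalD (F : Set (Distr α)) : Set (Distr α) :=
  {Δ' | Δ' ∈ F ∧ ∀ Δ'' ∈ F, DistLE Δ'' Δ' → DistLE Δ' Δ''}

/-- `Δ'` is obtained from `Δ` by merging exactly two components `S ≠ T`
(and keeping only the maximal sub-alphabets); the members of `⊥(Δ)`. -/
def MinMergedFrom (Δ' Δ : Distr α) : Prop :=
  ∃ S ∈ Δ.comps, ∃ T ∈ Δ.comps, S ≠ T ∧
    Δ'.comps = MaximalMem ((Δ.comps \ {S, T}) ∪ {S ∪ T})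

/-- The set `A(Δ)` of shared symbols of a distribution. -/
def SharedSyms (Δ : Distr α) : Set α :=
  {a | ∃ S ∈ Δ.comps, ∃ T ∈ Δ.comps, S ≠ T ∧ a ∈ S ∧ a ∈ T}

/-- The substitution of `Δ'` into the component `C` of `Δ''` yields `Δs`:
`Δs` is obtained from the components of `Δ''` other than `C` together with the
intersections `C ∩ S` for components `S` of `Δ'`, keeping only the maximal
non-empty members. -/
def SubstResult (Δ' Δ'' : Distr α) (C : Set α) (Δs : Distr α) : Prop :=
  Δs.comps =
    MaximalMem {T : Set α |
      T.Nonempty ∧ (T ∈ Δ''.comps \ {C} ∨ ∃ S ∈ Δ'.comps, T = C ∩ S)}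

/-- One swap of two adjacent symbols forming a pair in `I`. -/
def SwapStep (I : Set (α × α)) (s t : List α) : Prop :=
  ∃ (u v : List α) (a b : α),
    (a, b) ∈ I ∧ s = u ++ a :: b :: v ∧ t = u ++ b :: a :: v

/-- Trace equivalence with respect to `I`: a finite sequence of swaps of
adjacent independent symbols. -/
def TraceEquiv (I : Set (α × α)) : List α → List α → Prop :=
  Relation.ReflTransGen (SwapStep I)

/-- `L` is trace-closed with respect to `I`. -/
def TraceClosed (I : Set (α × α)) (L : Set (List α)) : Prop :=
  L = {t | ∃ s ∈ L, TraceEquiv I s t}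

/-- The map `N` determined by the enumeration `c` of the components of a
distribution: `N(a) = {i : a ∉ Σ_i}`. -/
def Nmap {n : ℕ} (c : Fin n → Set α) (a : α) : Set (Fin n) :=
  {i | a ∉ c i}

/-- A simple path from `x` to `y` in the graph `(Σ, D)`: a list of pairwise
distinct symbols, starting at `x`, ending at `y`, with consecutive symbols
related by `D`. -/
def IsSimplePath (D : Set (α × α)) (p : List α) (x y : α) : Prop :=
  p.Nodup ∧ p.head? = some x ∧ p.getLast? = some y ∧
    p.Chain' (fun a b => (a, b) ∈ D)

/-- `Cr_D(S, y)` (with `N` given by the enumeration `c`): the set of indices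
`i` such that some simple path `p` from some `x ∈ S` to `y` in `(Σ, D)`
satisfies `i ∈ ⋂_{a ∈ p.dropLast} N(a)`. -/
def CrSet {n : ℕ} (c : Fin n → Set α) (D : Set (α × α)) (S : Set α) (y : α) :
    Set (Fin n) :=
  {i | ∃ x ∈ S, ∃ p : List α,
    IsSimplePath D p x y ∧ ∀ a ∈ p.dropLast, i ∈ Nmap c a}

/-- The smallest set of distributions containing `Q` and closed under
substitution. -/
inductive SubstClosure (Q : Set (Distr α)) : Distr α → Prop
  | base (Δ' : Distr α) (h : Δ' ∈ Q) : SubstClosure Q Δ'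
  | step (Δ' Δ'' Δs : Distr α) (C : Set α)
      (h1 : SubstClosure Q Δ') (h2 : SubstClosure Q Δ'')
      (hC : C ∈ Δ''.comps) (hA : SharedSyms Δ' ⊆ C)
      (hs : SubstResult Δ' Δ'' C Δs) : SubstClosure Q Δs

end Defs

section Count

variable {α : Type} [Fintype α] [DecidableEq α]

/-- `L(Σ_j)` (with `j` 0-indexed, so the paper's exponent `j+1` is `j+2`
here): all strings containing exactly one occurrence of each `σ_i ∈ Σ_j` and
exactly `j+2` occurrences of each `σ_i ∉ Σ_j`. -/
def Lword {m : ℕ} (σ : Fin m → α) (Sj : Set α) (j : ℕ) : Set (List α) :=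
  {s | ∀ i : Fin m,
    (σ i ∈ Sj → s.count (σ i) = 1) ∧ (σ i ∉ Sj → s.count (σ i) = j + 2)}

/-- The candidate counter example `L_cand = ⋃_j L(Σ_j)`, relative to an
enumeration `c` of the components and an enumeration `σ` of the alphabet. -/
def Lcand {n m : ℕ} (c : Fin n → Set α) (σ : Fin m → α) : Set (List α) :=
  ⋃ j : Fin n, Lword σ (c j) (j : ℕ)

end Count

section Aux

variable {α : Type} [Fintype α]

lemma projA_nil (S : Set α) : projA S ([] : List α) = [] := rfl

open scoped Classical in
lemma projA_cons (S : Set α) (a : α) (l : List α) :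
    projA S (a :: l) = if a ∈ S then a :: projA S l else projA S l := by
  simp only [projA, List.filter_cons]
  by_cases h : a ∈ S
  · simp [h]
  · simp [h]

lemma projA_projA {S T : Set α} (h : S ⊆ T) (s : List α) :
    projA S (projA T s) = projA S s := by
  induction s with
  | nil => rfl
  | cons a l ih =>
    by_cases hT : a ∈ T
    · by_cases hS : a ∈ S <;> simp [projA_cons, hT, hS, ih]
    · have hS : a ∉ S := fun hS => hT (h hS)
      simp [projA_cons, hT, hS, ih]

/-- A language of the form `projA S ⁻¹' M` with `S ∈ Δ.comps` is decomposable
with respect to `Δ`. -/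
lemma decomposable_preimage (Δ : Distr α) {S : Set α} (hS : S ∈ Δ.comps)
    (M : Set (List α)) : Decomposable (projA S ⁻¹' M) Δ := by
  apply Set.Subset.antisymm
  · intro s hs
    simp only [Set.mem_iInter]
    intro T _
    exact ⟨s, hs, rfl⟩
  · intro s hs
    simp only [Set.mem_iInter] at hs
    obtain ⟨w, hw, hws⟩ := hs S hS
    simpa [Set.mem_preimage, ← hws] using hw

end Aux

/-- `Δ ≤_Σ Δ'` iff the decomposability of any language `L`
with respect to `Δ` implies its decomposability with respect to `Δ'`. -/
theorem statement_14 {α : Type} [Fintype α] (Δ Δ' : Distr α) :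
    DistLE Δ Δ' ↔
      ∀ L : Set (List α), Decomposable L Δ → Decomposable L Δ' := by
  constructor
  · -- forward direction
    intro hle L hL
    apply Set.Subset.antisymm
    · intro s hs
      simp only [Set.mem_iInter]
      intro T _
      exact ⟨s, hs, rfl⟩
    · intro s hs
      simp only [Set.mem_iInter] at hs
      rw [hL]
      simp only [Set.mem_iInter]
      intro S hS
      obtain ⟨T, hT, hST⟩ := hle S hS
      obtain ⟨w, hw, hws⟩ := hs T hT
      refine ⟨w, hw, ?_⟩
      calc projA S w = projA S (projA T w) := (projA_projA hST w).symm
        _ = projA S (projA T s) := by rw [hws]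
        _ = projA S s := projA_projA hST s
  · -- backward direction
    intro h S hS
    by_contra hno
    push_neg at hno
    -- counterexample language: strings with an even number of `S`-symbols
    set L : Set (List α) := projA S ⁻¹' {w | Even w.length} with hLdef
    have hdec : Decomposable L Δ := decomposable_preimage Δ hS _
    have hdec' : Decomposable L Δ' := h L hdec
    obtain ⟨a, ha⟩ := Δ.comps_nonempty S hS
    have hmem : [a] ∈ ⋂ T ∈ Δ'.comps, projA T ⁻¹' (projA T '' L) := by
      simp only [Set.mem_iInter]
      intro T hT
      by_cases haT : a ∈ T
      · obtain ⟨b, hbS, hbT⟩ := Set.not_subset.mp (hno T hT)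
        refine ⟨[a, b], ?_, ?_⟩
        · simp [hLdef, projA_cons, projA_nil, ha, hbS]
        · simp [projA_cons, projA_nil, haT, hbT]
      · refine ⟨[], ?_, ?_⟩
        · simp [hLdef, projA_nil]
        · simp [projA_cons, projA_nil, haT]
    rw [← hdec'] at hmem
    simp [hLdef, projA_cons, projA_nil, ha, Nat.even_iff] at hmem
end

section
/- If {Δ_1, …, Δ_l} is a reduction of a distribution Δ of Σ, then for every subset Σ' ⊆ Σ of cardinality at least 2, one has: (Σ' ⊑ Δ_i for every i ∈ [1, l]) ⟺ Σ' ⊑ Δ. -/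
section Aux

variable {α : Type}

lemma mem_projA {T : Set α} {s : List α} {a : α} :
    a ∈ projA T s ↔ a ∈ s ∧ a ∈ T := by
  simp [projA, List.mem_filter]

lemma projA_eq_self {T : Set α} {s : List α}
    (h : ∀ a ∈ s, a ∈ T) : projA T s = s := by
  apply List.filter_eq_self.mpr
  intro a ha
  simpa using h a ha

/-- Strings over the alphabet `S` that miss at least one symbol of `S`. -/
def Lmiss (S : Set α) : Set (List α) :=
  { w | (∀ a ∈ w, a ∈ S) ∧ ∃ a ∈ S, a ∉ w }

lemma decomposable_Lmiss_iff [Fintype α] (S : Set α) (Δ : Distr α) :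
    Decomposable (Lmiss S) Δ ↔ SqSub S Δ := by
  constructor
  · -- contrapositive: if S is in no component, Lmiss S is not decomposable
    intro hd
    by_contra hn
    have hSfin : S.Finite := Set.toFinite S
    set w0 : List α := hSfin.toFinset.toList with hw0
    have hmemw0 : ∀ a : α, a ∈ w0 ↔ a ∈ S := by
      intro a
      simp [hw0, Set.Finite.mem_toFinset]
    have hw0notL : w0 ∉ Lmiss S := by
      rintro ⟨-, a, haS, haw⟩
      exact haw ((hmemw0 a).mpr haS)
    have hw0mem : w0 ∈ ⋂ T ∈ Δ.comps, projA T ⁻¹' (projA T '' Lmiss S) := by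
      refine Set.mem_iInter₂.mpr fun T hT => ?_
      obtain ⟨a, haS, haT⟩ : ∃ a ∈ S, a ∉ T := by
        by_contra hc
        push_neg at hc
        exact hn ⟨T, hT, hc⟩
      refine ⟨projA T w0, ⟨?_, ⟨a, haS, ?_⟩⟩, ?_⟩
      · intro c hc
        exact (hmemw0 c).mp (mem_projA.mp hc).1
      · intro hmem
        exact haT (mem_projA.mp hmem).2
      · exact projA_eq_self fun c hc => (mem_projA.mp hc).2
    rw [← hd] at hw0mem
    exact hw0notL hw0mem
  · rintro ⟨T, hT, hST⟩
    apply Set.Subset.antisymm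
    · intro w hw
      refine Set.mem_iInter₂.mpr fun T' hT' => ⟨w, hw, rfl⟩
    · intro w hw
      have hw' := Set.mem_iInter₂.mp hw
      have hsub : ∀ c ∈ w, c ∈ S := by
        intro c hc
        obtain ⟨Ti, hTi, hcTi⟩ := Δ.comps_cover c
        obtain ⟨u, huL, hu⟩ := hw' Ti hTi
        have : c ∈ projA Ti u := by
          rw [hu]; exact mem_projA.mpr ⟨hc, hcTi⟩
        exact huL.1 c (mem_projA.mp this).1
      obtain ⟨u, huL, hu⟩ := hw' T hT
      have h1 : projA T w = w := projA_eq_self fun c hc => hST (hsub c hc)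
      have h2 : projA T u = u := projA_eq_self fun c hc => hST (huL.1 c hc)
      rw [← h1, ← hu, h2]
      exact huL

end Aux

/-- If `P` is a reduction of `Δ`, then for every
`Σ' ⊆ Σ` of cardinality at least 2: `(∀ Δ' ∈ P, Σ' ⊑ Δ') ↔ Σ' ⊑ Δ`. -/
theorem statement_17 {α : Type} [Fintype α] (Δ : Distr α) (P : Set (Distr α))
    (h : IsReduction P Δ) :
    ∀ S : Set α, 2 ≤ S.ncard → ((∀ Δ' ∈ P, SqSub S Δ') ↔ SqSub S Δ) := by
  intro S _hS
  simp only [← decomposable_Lmiss_iff (S := S)]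
  exact (h.2.2 (Lmiss S)).symm
end
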